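/- arXiv:1911.12260 — 5 statements merged into one kernel-verified Lean document; each statement's English description precedes it below -/
import Mathlib

section
/- The set of detectable errors of an ((n,K:M))_q hybrid code forms a complex vector subspace of B(H), H = (C^q)^{⊗n}, of dimension q^{2n} - (MK)^2 + M. -/
/-!
Put `Q = ∑ a, P a` and `T E = Q * E * Q`. Since `P b * Q = P b` and `Q * P a = P a`, the blocks
`P b * E * P a` only see `T E`, and `E` is detectable iff `T E ∈ span {P a}`. So the detectable
errors form the preimage under `T` of an `M`-dimensional subspace of `range T`, of dimension
`M + dim ker T`. Over a field of characteristic zero an idempotent has rank equal to its trace;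
applied to `T` this gives `rank T = (tr Q)² = (rank Q)²`, and applied to `Q` and to each `P a` it
gives `rank Q = M * K`.
-/

open Matrix Module LinearMap Submodule

theorem Matrix.stdBasis_repr_apply {R m n : Type*} [Semiring R] [Fintype m] [Finite n]
    (X : Matrix m n R) (i : m) (j : n) : (stdBasis R m n).repr X (i, j) = X i j := by
  simp [stdBasis]

section

variable {K : Type*} [Field K] {m : Type*} [Fintype m] [DecidableEq m]

theorem Matrix.trace_mulLeftRight (A B : Matrix m m K) :
    LinearMap.trace K (Matrix m m K) (mulLeftRight K (A, B)) = A.trace * B.trace := by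
  rw [LinearMap.trace_eq_matrix_trace K (stdBasis K m m), Matrix.trace, Fintype.sum_prod_type,
    Matrix.trace, Matrix.trace, Finset.sum_mul_sum]
  refine Finset.sum_congr rfl fun i _ => Finset.sum_congr rfl fun j _ => ?_
  rw [diag_apply, toMatrix_apply, stdBasis_repr_apply, stdBasis_eq_single, mulLeftRight_apply,
    Matrix.mul_apply, Finset.sum_eq_single j (fun k _ hk => by simp [hk]) (by simp),
    mul_single_apply_same, mul_one, diag_apply, diag_apply]

theorem Matrix.rank_eq_trace_of_isIdempotentElem [CharZero K] {A : Matrix m m K}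
    (hA : IsIdempotentElem A) : (A.rank : K) = A.trace := by
  have h : IsIdempotentElem (toLin' A) := hA.map Matrix.toLinAlgEquiv'
  rw [← Matrix.trace_toLin'_eq, h.isProj_range.trace, Matrix.rank, Matrix.toLin'_apply']

theorem Matrix.isIdempotentElem_mulLeftRight {A : Matrix m m K} (hA : IsIdempotentElem A) :
    IsIdempotentElem (mulLeftRight K (A, A)) := by
  ext1 X
  simp only [Module.End.mul_apply, mulLeftRight_apply, ← Matrix.mul_assoc, hA.eq]
  simp only [Matrix.mul_assoc, hA.eq]

theorem Matrix.finrank_range_mulLeftRight [CharZero K] {A : Matrix m m K}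
    (hA : IsIdempotentElem A) :
    finrank K (range (mulLeftRight K (A, A))) = A.rank ^ 2 := by
  have h := (isIdempotentElem_mulLeftRight hA).isProj_range.trace
  rw [trace_mulLeftRight, ← rank_eq_trace_of_isIdempotentElem hA] at h
  exact_mod_cast h.symm.trans (sq _).symm

theorem LinearMap.finrank_comap_of_le_range {V W : Type*} [AddCommGroup V] [Module K V]
    [FiniteDimensional K V] [AddCommGroup W] [Module K W] (f : V →ₗ[K] W) {p : Submodule K W}
    (hp : p ≤ range f) : finrank K (p.comap f) = finrank K p + finrank K (ker f) := by
  have h := finrank_range_add_finrank_ker (f.domRestrict (p.comap f))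
  rw [range_domRestrict, Submodule.map_comap_eq, inf_eq_right.mpr hp, ker_domRestrict,
    (Submodule.comapSubtypeEquivOfLe (fun x hx => by simp [mem_ker.mp hx])).finrank_eq] at h
  exact h.symm

namespace OrthogonalIdempotents

section Algebra

variable {A ι : Type*} [Ring A] [Algebra K A] {e : ι → A}

theorem sum_mul_of_mem (he : OrthogonalIdempotents e) {i : ι} {s : Finset ι} (h : i ∈ s) :
    (∑ j ∈ s, e j) * e i = e i := by
  classical
  simp [Finset.sum_mul, he.mul_eq, h]

theorem linearIndependent (he : OrthogonalIdempotents e) (hne : ∀ i, e i ≠ 0) :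
    LinearIndependent K e := by
  classical
  refine linearIndependent_iff'.mpr fun s c hsum i hi => ?_
  have h := congrArg (e i * ·) hsum
  simp only [Finset.mul_sum, mul_smul_comm, he.mul_eq, mul_zero] at h
  simpa [hi, hne i] using h

variable [Fintype ι]

theorem mul_sum_mul_sum_mul (he : OrthogonalIdempotents e) (a b : ι) (x : A) :
    e b * ((∑ i, e i) * x * ∑ i, e i) * e a = e b * x * e a := by
  rw [← mul_assoc, ← mul_assoc, he.mul_sum_of_mem (Finset.mem_univ b), mul_assoc,
    he.sum_mul_of_mem (Finset.mem_univ a)]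

theorem mem_comap_span_range_iff (he : OrthogonalIdempotents e) (x : A) :
    x ∈ (span K (Set.range e)).comap (mulLeftRight K (∑ i, e i, ∑ i, e i)) ↔
      (∀ a, ∃ c : K, e a * x * e a = c • e a) ∧ ∀ a b, a ≠ b → e b * x * e a = 0 := by
  classical
  rw [Submodule.mem_comap, mulLeftRight_apply, mem_span_range_iff_exists_fun]
  constructor
  · rintro ⟨c, hc⟩
    have hblock : ∀ a b, e b * x * e a = if b = a then c b • e b else 0 := by
      intro a b
      rw [← he.mul_sum_mul_sum_mul, ← hc]
      simp [Finset.mul_sum, he.mul_eq]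
    exact ⟨fun a => ⟨c a, by simpa using hblock a a⟩,
      fun a b hab => by simpa [hab.symm] using hblock a b⟩
  · rintro ⟨hdiag, hoff⟩
    choose c hc using hdiag
    refine ⟨c, ?_⟩
    simp only [Finset.sum_mul, Finset.mul_sum]
    refine Finset.sum_congr rfl fun a _ => ?_
    rw [Finset.sum_eq_single a (fun i _ hi => hoff a i (Ne.symm hi)) (by simp), hc]

theorem span_range_le_range_mulLeftRight (he : OrthogonalIdempotents e) :
    span K (Set.range e) ≤ range (mulLeftRight K (∑ i, e i, ∑ i, e i)) := by
  rw [Submodule.span_le]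
  rintro _ ⟨a, rfl⟩
  exact ⟨e a, by rw [mulLeftRight_apply, he.sum_mul_of_mem (Finset.mem_univ a),
    he.mul_sum_of_mem (Finset.mem_univ a)]⟩

end Algebra

theorem rank_sum [CharZero K] {ι : Type*} {P : ι → Matrix m m K} (hP : OrthogonalIdempotents P)
    (s : Finset ι) : (∑ i ∈ s, P i).rank = ∑ i ∈ s, (P i).rank := by
  apply Nat.cast_injective (R := K)
  rw [Matrix.rank_eq_trace_of_isIdempotentElem hP.isIdempotentElem_sum, Nat.cast_sum, trace_sum]
  exact Finset.sum_congr rfl fun i _ => (Matrix.rank_eq_trace_of_isIdempotentElem (hP.idem i)).symm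

end OrthogonalIdempotents

end

theorem stmt_0_general (q n K M : ℕ) (hK : 0 < K)
    (P : Fin M → Matrix (Fin (q ^ n)) (Fin (q ^ n)) ℂ)
    (hproj : ∀ a, P a * P a = P a)
    (hrank : ∀ a, (P a).rank = K)
    (horth : ∀ a b, a ≠ b → P a * P b = 0) :
    ∃ D : Submodule ℂ (Matrix (Fin (q ^ n)) (Fin (q ^ n)) ℂ),
      (D : Set (Matrix (Fin (q ^ n)) (Fin (q ^ n)) ℂ)) =
        {E | (∀ a, ∃ lam : ℂ, P a * E * P a = lam • P a) ∧
          ∀ a b, a ≠ b → P b * E * P a = 0} ∧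
      Module.finrank ℂ D = q ^ (2 * n) - (M * K) ^ 2 + M := by
  have hP : OrthogonalIdempotents P := ⟨hproj, fun a b => horth a b⟩
  have hne : ∀ a, P a ≠ 0 := fun a h => hK.ne' (by rw [← hrank a, h, Matrix.rank_zero])
  set T := mulLeftRight ℂ (∑ a, P a, ∑ a, P a)
  refine ⟨(span ℂ (Set.range P)).comap T, Set.ext hP.mem_comap_span_range_iff, ?_⟩
  have hrankQ : (∑ a, P a).rank = M * K := by simp [hP.rank_sum, hrank]
  have hrangeT : finrank ℂ (range T) = (M * K) ^ 2 := by
    rw [finrank_range_mulLeftRight hP.isIdempotentElem_sum, hrankQ]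
  have hker := finrank_range_add_finrank_ker T
  rw [hrangeT, finrank_matrix, finrank_self, mul_one, Fintype.card_fin, ← sq, ← pow_mul,
    mul_comm n] at hker
  rw [finrank_comap_of_le_range T hP.span_range_le_range_mulLeftRight,
    finrank_span_eq_card (hP.linearIndependent hne), Fintype.card_fin]
  omega

/-- the set of detectable errors of an `((n,K:M))_q` hybrid code,
given by `M` pairwise orthogonal rank-`K` orthogonal projectors `P_a` on
`H = (ℂ^q)^{⊗n} ≅ ℂ^{q^n}`, is a complex subspace of `B(H)` of dimension
`q^{2n} - (MK)² + M`.  An operator `E` is detectable iff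
`P_b E P_a = δ_{ab} λ_{E,a} P_a` for some scalars `λ_{E,a}`. -/
theorem stmt_0 (q n K M : ℕ) (hq : 0 < q) (hK : 0 < K) (hM : 0 < M)
    (P : Fin M → Matrix (Fin (q ^ n)) (Fin (q ^ n)) ℂ)
    (hproj : ∀ a, P a * P a = P a) (hherm : ∀ a, (P a)ᴴ = P a)
    (hrank : ∀ a, (P a).rank = K)
    (horth : ∀ a b, a ≠ b → P a * P b = 0) :
    ∃ D : Submodule ℂ (Matrix (Fin (q ^ n)) (Fin (q ^ n)) ℂ),
      (D : Set (Matrix (Fin (q ^ n)) (Fin (q ^ n)) ℂ)) =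
        {E | (∀ a, ∃ lam : ℂ, P a * E * P a = lam • P a) ∧
          ∀ a b, a ≠ b → P b * E * P a = 0} ∧
      Module.finrank ℂ D = q ^ (2 * n) - (M * K) ^ 2 + M :=
  stmt_0_general q n K M hK P hproj hrank horth
end

section
/- For M > 1, an ((n,K:M))_q hybrid code detects strictly more errors than an ((n,KM))_q quantum code: the space of detectable errors of the hybrid code has dimension q^{2n} - (MK)^2 + M, whereas the space of detectable errors of any ((n,KM))_q quantum code has dimension q^{2n} - (KM)^2 + 1. -/
open Matrix Module LinearMap

variable {N : ℕ}

noncomputable def Phi (A B : Matrix (Fin N) (Fin N) ℂ) :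
    Matrix (Fin N) (Fin N) ℂ →ₗ[ℂ] Matrix (Fin N) (Fin N) ℂ :=
  (LinearMap.mulLeft ℂ A).comp (LinearMap.mulRight ℂ B)

@[simp] lemma Phi_apply (A B E : Matrix (Fin N) (Fin N) ℂ) :
    Phi A B E = A * E * B := by
  simp [Phi, LinearMap.mulLeft_apply, LinearMap.mulRight_apply, mul_assoc]

noncomputable def TT (A B : Matrix (Fin N) (Fin N) ℂ) :
    Submodule ℂ (Matrix (Fin N) (Fin N) ℂ) :=
  LinearMap.ker (Phi A B - LinearMap.id)

@[simp] lemma mem_TT {A B E : Matrix (Fin N) (Fin N) ℂ} :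
    E ∈ TT A B ↔ A * E * B = E := by
  simp [TT, LinearMap.mem_ker, sub_eq_zero]

lemma idem_fix {A : Matrix (Fin N) (Fin N) ℂ} (hA : A * A = A)
    {x : Fin N → ℂ} (hx : x ∈ LinearMap.range A.mulVecLin) :
    A.mulVecLin x = x := by
  obtain ⟨y, rfl⟩ := hx
  have : (A * A).mulVecLin y = A.mulVecLin (A.mulVecLin y) := by
    rw [Matrix.mulVecLin_mul]; rfl
  rw [← this, hA]

lemma rr_fix {B : Matrix (Fin N) (Fin N) ℂ} (hB : B * B = B) (v : Fin N → ℂ) :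
    B.mulVecLin.rangeRestrict (B.mulVecLin v) = B.mulVecLin.rangeRestrict v :=
  Subtype.ext (idem_fix hB ⟨v, rfl⟩)

lemma TT_mul_right {A B E : Matrix (Fin N) (Fin N) ℂ} (hB : B * B = B)
    (hE : E ∈ TT A B) : E * B = E := by
  rw [mem_TT] at hE
  conv_lhs => rw [← hE]
  rw [mul_assoc, mul_assoc, hB, ← mul_assoc, hE]

noncomputable def fromHom (A B : Matrix (Fin N) (Fin N) ℂ)
    (h : LinearMap.range B.mulVecLin →ₗ[ℂ] LinearMap.range A.mulVecLin) :
    Matrix (Fin N) (Fin N) ℂ :=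
  Matrix.toLin'.symm
    ((LinearMap.range A.mulVecLin).subtype ∘ₗ h ∘ₗ B.mulVecLin.rangeRestrict)

lemma fromHom_mulVecLin (A B : Matrix (Fin N) (Fin N) ℂ)
    (h : LinearMap.range B.mulVecLin →ₗ[ℂ] LinearMap.range A.mulVecLin) :
    (fromHom A B h).mulVecLin =
      (LinearMap.range A.mulVecLin).subtype ∘ₗ h ∘ₗ B.mulVecLin.rangeRestrict := by
  rw [← Matrix.toLin'_apply', fromHom, LinearEquiv.apply_symm_apply]

lemma fromHom_mem {A B : Matrix (Fin N) (Fin N) ℂ} (hA : A * A = A) (hB : B * B = B)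
    (h : LinearMap.range B.mulVecLin →ₗ[ℂ] LinearMap.range A.mulVecLin) :
    fromHom A B h ∈ TT A B := by
  rw [mem_TT]
  apply Matrix.toLin'.injective
  rw [Matrix.toLin'_mul, Matrix.toLin'_mul]
  refine LinearMap.ext fun v => ?_
  simp only [LinearMap.comp_apply, Matrix.toLin'_apply', fromHom_mulVecLin,
    Submodule.subtype_apply]
  rw [rr_fix hB]
  exact idem_fix hA (h _).2

noncomputable def conjEquiv {A B : Matrix (Fin N) (Fin N) ℂ}
    (hA : A * A = A) (hB : B * B = B) :
    TT A B ≃ₗ[ℂ] (LinearMap.range B.mulVecLin →ₗ[ℂ] LinearMap.range A.mulVecLin) where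
  toFun E := LinearMap.codRestrict _
    ((Matrix.mulVecLin E.1).comp (LinearMap.range B.mulVecLin).subtype)
    (by
      intro x
      have h : (E : Matrix (Fin N) (Fin N) ℂ).mulVecLin
          = A.mulVecLin ∘ₗ (E.1 * B).mulVecLin := by
        conv_lhs => rw [show (E : Matrix (Fin N) (Fin N) ℂ) = A * E.1 * B from
          (mem_TT.mp E.2).symm]
        rw [mul_assoc, Matrix.mulVecLin_mul]
      rw [LinearMap.comp_apply, h]
      exact ⟨_, rfl⟩)
  map_add' E F := by
    ext x
    simp [Matrix.mulVecLin_apply, Matrix.add_mulVec]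
  map_smul' c E := by
    ext x
    simp [Matrix.mulVecLin_apply, Matrix.smul_mulVec]
  invFun h := ⟨fromHom A B h, fromHom_mem hA hB h⟩
  left_inv E := by
    apply Subtype.ext
    show fromHom A B _ = E.1
    rw [fromHom, LinearEquiv.symm_apply_eq]
    refine LinearMap.ext fun v => ?_
    simp only [LinearMap.comp_apply, LinearMap.codRestrict_apply, Submodule.subtype_apply,
      Matrix.toLin'_apply']
    have h1 : E.1.mulVecLin (B.mulVecLin v) = (E.1 * B).mulVecLin v := by
      rw [Matrix.mulVecLin_mul]; rfl
    rw [h1, TT_mul_right hB E.2]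
  right_inv h := by
    refine LinearMap.ext fun x => Subtype.ext ?_
    show (fromHom A B h).mulVecLin ((LinearMap.range B.mulVecLin).subtype x) = (h x : Fin N → ℂ)
    rw [fromHom_mulVecLin]
    simp only [LinearMap.comp_apply, Submodule.subtype_apply]
    congr 1
    refine congrArg h (Subtype.ext ?_)
    rw [LinearMap.codRestrict_apply]
    exact idem_fix hB x.2

set_option maxHeartbeats 1000000 in
lemma finrank_TT {A B : Matrix (Fin N) (Fin N) ℂ} (hA : A * A = A) (hB : B * B = B) :
    finrank ℂ (TT A B) = A.rank * B.rank := by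
  have e : finrank ℂ (TT A B) = finrank ℂ
      (LinearMap.range B.mulVecLin →ₗ[ℂ] LinearMap.range A.mulVecLin) :=
    LinearEquiv.finrank_eq (conjEquiv hA hB)
  rw [Module.finrank_linearMap] at e
  rw [e, Matrix.rank, Matrix.rank, mul_comm]

lemma range_Phi {A B : Matrix (Fin N) (Fin N) ℂ} (hA : A * A = A) (hB : B * B = B) :
    LinearMap.range (Phi A B) = TT A B := by
  apply le_antisymm
  · rintro _ ⟨E, rfl⟩
    rw [mem_TT, Phi_apply,
      show A * (A * E * B) * B = A * A * E * (B * B) by noncomm_ring, hA, hB]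
  · intro E hE
    exact ⟨E, by rw [Phi_apply]; exact mem_TT.mp hE⟩

lemma finrank_ker_Phi_add {A B : Matrix (Fin N) (Fin N) ℂ} (hA : A * A = A)
    (hB : B * B = B) :
    A.rank * B.rank + finrank ℂ (LinearMap.ker (Phi A B)) = N ^ 2 := by
  have h := LinearMap.finrank_range_add_finrank_ker (Phi A B)
  rw [range_Phi hA hB, finrank_TT hA hB] at h
  rw [h, Module.finrank_matrix]
  simp [sq]

lemma finrank_comap_eq {V W : Type*} [AddCommGroup V] [Module ℂ V] [AddCommGroup W]
    [Module ℂ W] [FiniteDimensional ℂ V] (f : V →ₗ[ℂ] W) (L : Submodule ℂ W)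
    (hL : L ≤ LinearMap.range f) :
    finrank ℂ (Submodule.comap f L) = finrank ℂ L + finrank ℂ (LinearMap.ker f) := by
  have h1 := LinearMap.finrank_range_add_finrank_ker (f.domRestrict (Submodule.comap f L))
  rw [LinearMap.range_domRestrict, LinearMap.ker_domRestrict] at h1
  have h2 : (Submodule.comap f L).map f = L := by
    rw [Submodule.map_comap_eq, inf_eq_right.mpr hL]
  have hker : LinearMap.ker f ≤ Submodule.comap f L := fun x hx => by
    simp only [Submodule.mem_comap, LinearMap.mem_ker.mp hx, Submodule.zero_mem]
  have h3 : finrank ℂ ((LinearMap.ker f).comap (Submodule.comap f L).subtype)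
      = finrank ℂ (LinearMap.ker f) :=
    (Submodule.comapSubtypeEquivOfLe hker).finrank_eq
  rw [h2, h3] at h1
  omega

noncomputable def piSubEquiv {ι : Type*} [Fintype ι] {φ : ι → Type*}
    [∀ i, AddCommGroup (φ i)] [∀ i, Module ℂ (φ i)] (p : ∀ i, Submodule ℂ (φ i)) :
    (Submodule.pi Set.univ p) ≃ₗ[ℂ] ((i : ι) → p i) where
  toFun x i := ⟨x.1 i, x.2 i trivial⟩
  map_add' x y := rfl
  map_smul' c x := rfl
  invFun f := ⟨fun i => f i, fun i _ => (f i).2⟩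
  left_inv x := rfl
  right_inv f := rfl

lemma finrank_piSub {ι : Type*} [Fintype ι] {φ : ι → Type*}
    [∀ i, AddCommGroup (φ i)] [∀ i, Module ℂ (φ i)] [∀ i, FiniteDimensional ℂ (φ i)]
    (p : ∀ i, Submodule ℂ (φ i)) :
    finrank ℂ (Submodule.pi Set.univ p) = ∑ i, finrank ℂ (p i) := by
  rw [(piSubEquiv p).finrank_eq, Module.finrank_pi_fintype]

/-- for `M > 1`, an `((n,K:M))_q` hybrid code detects strictly more
errors than an `((n,KM))_q` quantum code: its space of detectable errors has
dimension `q^{2n} - (MK)² + M`, whereas the space of detectable errors of any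
`((n,KM))_q` quantum code (projector `Q` of rank `KM`, with `E` detectable iff
`QEQ = λ_E Q`) has dimension `q^{2n} - (KM)² + 1 < q^{2n} - (MK)² + M`. -/
theorem stmt_1 (q n K M : ℕ) (hq : 0 < q) (hK : 0 < K) (hM : 1 < M)
    (P : Fin M → Matrix (Fin (q ^ n)) (Fin (q ^ n)) ℂ)
    (hproj : ∀ a, P a * P a = P a) (hherm : ∀ a, (P a)ᴴ = P a)
    (hrank : ∀ a, (P a).rank = K)
    (horth : ∀ a b, a ≠ b → P a * P b = 0)
    (Q : Matrix (Fin (q ^ n)) (Fin (q ^ n)) ℂ)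
    (hQproj : Q * Q = Q) (hQherm : Qᴴ = Q) (hQrank : Q.rank = K * M) :
    ∃ Dh Dq : Submodule ℂ (Matrix (Fin (q ^ n)) (Fin (q ^ n)) ℂ),
      (Dh : Set (Matrix (Fin (q ^ n)) (Fin (q ^ n)) ℂ)) =
        {E | (∀ a, ∃ lam : ℂ, P a * E * P a = lam • P a) ∧
          ∀ a b, a ≠ b → P b * E * P a = 0} ∧
      (Dq : Set (Matrix (Fin (q ^ n)) (Fin (q ^ n)) ℂ)) =
        {E | ∃ lam : ℂ, Q * E * Q = lam • Q} ∧
      Module.finrank ℂ Dh = q ^ (2 * n) - (M * K) ^ 2 + M ∧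
      Module.finrank ℂ Dq = q ^ (2 * n) - (K * M) ^ 2 + 1 ∧
      Module.finrank ℂ Dq < Module.finrank ℂ Dh := by
  have hpow : q ^ (2 * n) = (q ^ n) ^ 2 := by rw [mul_comm, pow_mul]
  have hQ0 : Q ≠ 0 := by
    intro h
    rw [h, Matrix.rank_zero] at hQrank
    have := Nat.mul_pos hK (lt_trans one_pos hM)
    omega
  have hP0 : ∀ a, P a ≠ 0 := by
    intro a h
    have := hrank a
    rw [h, Matrix.rank_zero] at this
    omega
  -- the quantum code detectable space
  set Dq : Submodule ℂ (Matrix (Fin (q ^ n)) (Fin (q ^ n)) ℂ) :=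
    Submodule.comap (Phi Q Q) (ℂ ∙ Q) with hDq
  -- the hybrid code detectable space
  set Ψ : Matrix (Fin (q ^ n)) (Fin (q ^ n)) ℂ →ₗ[ℂ]
      (Fin M × Fin M → Matrix (Fin (q ^ n)) (Fin (q ^ n)) ℂ) :=
    LinearMap.pi (fun p => Phi (P p.1) (P p.2)) with hΨ
  set θ : (Fin M → ℂ) →ₗ[ℂ] (Fin M × Fin M → Matrix (Fin (q ^ n)) (Fin (q ^ n)) ℂ) :=
    LinearMap.pi (fun p => if p.1 = p.2 then
      (LinearMap.proj p.1).smulRight (P p.1) else 0) with hθ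
  have hθ_apply : ∀ lam p, θ lam p = if p.1 = p.2 then lam p.1 • P p.1 else 0 := by
    intro lam p
    rw [hθ, LinearMap.pi_apply]
    split_ifs <;> simp
  have hΨ_apply : ∀ E p, Ψ E p = P p.1 * E * P p.2 := by
    intro E p
    rw [hΨ, LinearMap.pi_apply, Phi_apply]
  set Dh : Submodule ℂ (Matrix (Fin (q ^ n)) (Fin (q ^ n)) ℂ) :=
    Submodule.comap Ψ (LinearMap.range θ) with hDh
  -- range of Ψ
  have hrangeΨ : LinearMap.range Ψ =
      Submodule.pi Set.univ (fun p => TT (P p.1) (P p.2)) := by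
    apply le_antisymm
    · rintro _ ⟨E, rfl⟩
      intro p _
      have : Ψ E p ∈ TT (P p.1) (P p.2) := by
        rw [hΨ_apply, mem_TT,
          show P p.1 * (P p.1 * E * P p.2) * P p.2
            = P p.1 * P p.1 * E * (P p.2 * P p.2) by noncomm_ring, hproj, hproj]
      exact this
    · intro X hX
      refine ⟨∑ p, X p, funext fun p => ?_⟩
      have hmem : ∀ p', P p'.1 * X p' * P p'.2 = X p' :=
        fun p' => mem_TT.mp (hX p' trivial)
      rw [hΨ_apply, Finset.mul_sum, Finset.sum_mul]
      rw [Finset.sum_eq_single_of_mem p (Finset.mem_univ p)]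
      · rw [hmem p]
      · intro p' _ hne
        rw [← hmem p',
          show P p.1 * (P p'.1 * X p' * P p'.2) * P p.2
            = P p.1 * P p'.1 * (X p' * (P p'.2 * P p.2)) by noncomm_ring]
        by_cases h1 : p'.1 = p.1
        · have h2 : p'.2 ≠ p.2 := fun h2 => hne (Prod.ext h1 h2)
          rw [horth _ _ h2, mul_zero, mul_zero]
        · rw [horth _ _ (Ne.symm h1), zero_mul]
  -- θ is injective
  have hθinj : Function.Injective θ := by
    rw [← LinearMap.ker_eq_bot, Submodule.eq_bot_iff]
    intro lam hlam
    rw [LinearMap.mem_ker] at hlam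
    funext a
    have := congrFun hlam (a, a)
    rw [hθ_apply] at this
    simp only [if_pos rfl, Pi.zero_apply] at this
    rcases smul_eq_zero.mp this with h | h
    · exact h
    · exact absurd h (hP0 a)
  have hLh : finrank ℂ (LinearMap.range θ) = M := by
    rw [LinearMap.finrank_range_of_inj hθinj]
    simp [Module.finrank_pi]
  have hLh_le : LinearMap.range θ ≤ LinearMap.range Ψ := by
    rw [hrangeΨ]
    rintro _ ⟨lam, rfl⟩ p _
    have : θ lam p ∈ TT (P p.1) (P p.2) := by
      rw [hθ_apply, mem_TT]
      split_ifs with h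
      · rw [← h]
        simp [mul_smul_comm, smul_mul_assoc, hproj]
      · simp
    exact this
  have hQle : (ℂ ∙ Q) ≤ LinearMap.range (Phi Q Q) := by
    rw [range_Phi hQproj hQproj, Submodule.span_singleton_le_iff_mem, mem_TT, hQproj, hQproj]
  -- dimension computations
  have hpow2 : (q ^ n) ^ 2 = q ^ n * q ^ n := sq (q ^ n)
  have hrangeΨdim : finrank ℂ (LinearMap.range Ψ) = (M * K) ^ 2 := by
    rw [hrangeΨ, finrank_piSub]
    have hc : ∀ p : Fin M × Fin M, finrank ℂ (TT (P p.1) (P p.2)) = K * K := by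
      intro p; rw [finrank_TT (hproj _) (hproj _), hrank, hrank]
    rw [Finset.sum_congr rfl (fun p _ => hc p), Finset.sum_const, Finset.card_univ,
      Fintype.card_prod, Fintype.card_fin, smul_eq_mul]
    ring
  have eΨ := LinearMap.finrank_range_add_finrank_ker Ψ
  rw [hrangeΨdim] at eΨ
  simp only [Module.finrank_matrix, Module.finrank_self, mul_one, Fintype.card_fin,
    ← hpow2] at eΨ
  have eQ := finrank_ker_Phi_add hQproj hQproj
  rw [hQrank, ← sq] at eQ
  have hDqdim : finrank ℂ Dq = q ^ (2 * n) - (K * M) ^ 2 + 1 := by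
    rw [hDq, finrank_comap_eq _ _ hQle, finrank_span_singleton hQ0, hpow]
    have h2 : (q ^ n) ^ 2 - (K * M) ^ 2 = finrank ℂ (LinearMap.ker (Phi Q Q)) := by
      rw [← eQ, Nat.add_sub_cancel_left]
    rw [h2]
    exact Nat.add_comm 1 _
  have hDhdim : finrank ℂ Dh = q ^ (2 * n) - (M * K) ^ 2 + M := by
    rw [hDh, finrank_comap_eq _ _ hLh_le, hLh, hpow]
    have h2 : (q ^ n) ^ 2 - (M * K) ^ 2 = finrank ℂ (LinearMap.ker Ψ) := by
      rw [← eΨ, Nat.add_sub_cancel_left]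
    rw [h2]
    exact Nat.add_comm M _
  refine ⟨Dh, Dq, ?_, ?_, hDhdim, hDqdim, ?_⟩
  · ext E
    simp only [SetLike.mem_coe, hDh, Submodule.mem_comap, LinearMap.mem_range,
      Set.mem_setOf_eq]
    constructor
    · rintro ⟨lam, hl⟩
      constructor
      · intro a
        refine ⟨lam a, ?_⟩
        have h := congrFun hl (a, a)
        rw [hθ_apply, hΨ_apply] at h
        simpa using h.symm
      · intro a b hab
        have h := congrFun hl (b, a)
        rw [hθ_apply, hΨ_apply, if_neg (show b ≠ a from fun e => hab e.symm)] at h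
        exact h.symm
    · rintro ⟨hdiag, hoff⟩
      choose lam hl using hdiag
      refine ⟨lam, funext fun p => ?_⟩
      rw [hθ_apply, hΨ_apply]
      by_cases h : p.1 = p.2
      · rw [if_pos h, ← h]
        exact (hl p.1).symm
      · rw [if_neg h]
        exact (hoff p.2 p.1 (fun e => h e.symm)).symm
  · ext E
    simp only [SetLike.mem_coe, hDq, Submodule.mem_comap, Submodule.mem_span_singleton,
      Phi_apply, Set.mem_setOf_eq]
    constructor
    · rintro ⟨a, ha⟩; exact ⟨a, ha.symm⟩
    · rintro ⟨a, ha⟩; exact ⟨a, ha.symm⟩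
  · rw [hDqdim, hDhdim, show (K * M) ^ 2 = (M * K) ^ 2 by rw [mul_comm]]
    exact Nat.add_lt_add_left hM _
end

section
/- A hybrid code detects all errors in E_n of weight d if and only if A_d^{(a,a)} = B_d^{(a,a)} for all a ∈ [M] and B_d^{(a,b)} = 0 for all a ≠ b in [M]. -/
open Matrix Finset

private lemma tr_mul_vmv {N : ℕ} (X : Matrix (Fin N) (Fin N) ℂ) (u v : Fin N → ℂ) :
    (X * vecMulVec u v).trace = v ⬝ᵥ X.mulVec u := by
  simp only [trace, diag_apply, mul_apply, vecMulVec_apply, dotProduct, mulVec,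
    Finset.mul_sum]
  exact Finset.sum_congr rfl fun k _ => Finset.sum_congr rfl fun l _ => by ring

private lemma vmv_mulVec {N : ℕ} (u v w : Fin N → ℂ) :
    (vecMulVec u v).mulVec w = (v ⬝ᵥ w) • u := by
  funext k
  simp only [mulVec, vecMulVec_apply, dotProduct, Pi.smul_apply, smul_eq_mul,
    Finset.sum_mul, Finset.mul_sum]
  exact Finset.sum_congr rfl fun l _ => by ring

private lemma quad {N : ℕ} (X Y : Matrix (Fin N) (Fin N) ℂ) (w u v z : Fin N → ℂ) :
    w ⬝ᵥ (X * vecMulVec u v * Y).mulVec z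
      = (w ⬝ᵥ X.mulVec u) * (v ⬝ᵥ Y.mulVec z) := by
  rw [Matrix.mul_assoc, ← Matrix.mulVec_mulVec, ← Matrix.mulVec_mulVec,
    vmv_mulVec, Matrix.mulVec_smul, dotProduct_smul, smul_eq_mul, mul_comm]

private lemma star_dot {N : ℕ} (X : Matrix (Fin N) (Fin N) ℂ) (u v : Fin N → ℂ) :
    star (star u ⬝ᵥ X.mulVec v) = star v ⬝ᵥ Xᴴ.mulVec u := by
  simp only [dotProduct, mulVec, conjTranspose_apply, star_sum, star_mul',
    Pi.star_apply, star_star, Finset.mul_sum]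
  rw [Finset.sum_comm]
  exact Finset.sum_congr rfl fun k _ => Finset.sum_congr rfl fun l _ => by ring

private lemma trace1 {N K : ℕ} (X : Matrix (Fin N) (Fin N) ℂ) (u : Fin K → Fin N → ℂ) :
    (X * ∑ i, vecMulVec (u i) (star (u i))).trace
      = ∑ i, star (u i) ⬝ᵥ X.mulVec (u i) := by
  rw [Matrix.mul_sum, trace_sum]
  exact Finset.sum_congr rfl fun i _ => tr_mul_vmv _ _ _

private lemma trace2 {N K : ℕ} (X : Matrix (Fin N) (Fin N) ℂ) (u : Fin K → Fin N → ℂ) :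
    (Xᴴ * ∑ i, vecMulVec (u i) (star (u i))).trace
      = star (∑ i, star (u i) ⬝ᵥ X.mulVec (u i)) := by
  rw [trace1, star_sum]
  exact Finset.sum_congr rfl fun i _ => (star_dot X (u i) (u i)).symm

private lemma sum_mulVec' {N K : ℕ} (A : Fin K → Matrix (Fin N) (Fin N) ℂ)
    (v : Fin N → ℂ) : (∑ j, A j) *ᵥ v = ∑ j, A j *ᵥ v := by
  funext k
  simp only [mulVec, dotProduct, Finset.sum_apply, Matrix.sum_apply, Finset.sum_mul]
  rw [Finset.sum_comm]

private lemma dot_sum' {N K : ℕ} (u : Fin N → ℂ) (w : Fin K → Fin N → ℂ) :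
    u ⬝ᵥ ∑ j, w j = ∑ j, u ⬝ᵥ w j := by
  simp only [dotProduct, Finset.sum_apply, Finset.mul_sum]
  rw [Finset.sum_comm]

private lemma trace3 {N K : ℕ} (X : Matrix (Fin N) (Fin N) ℂ) (u v : Fin K → Fin N → ℂ) :
    (X * (∑ j, vecMulVec (u j) (star (u j))) * Xᴴ
        * (∑ i, vecMulVec (v i) (star (v i)))).trace
      = ∑ i, ∑ j, ((Complex.normSq (star (v i) ⬝ᵥ X.mulVec (u j)) : ℝ) : ℂ) := by
  rw [Matrix.mul_sum, trace_sum]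
  refine Finset.sum_congr rfl fun i _ => ?_
  rw [tr_mul_vmv, Matrix.mul_sum, Finset.sum_mul, sum_mulVec', dot_sum']
  refine Finset.sum_congr rfl fun j _ => ?_
  rw [quad, ← star_dot, Complex.star_def, Complex.mul_conj]

private lemma normSq_sum' {K : ℕ} (v : Fin K → ℂ) :
    Complex.normSq (∑ i, v i)
      = ∑ i, ∑ j, (v i * (starRingEnd ℂ) (v j)).re := by
  have h : Complex.normSq (∑ i, v i)
      = ((∑ i, v i) * (starRingEnd ℂ) (∑ i, v i)).re := by
    rw [Complex.mul_conj]; simp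
  rw [h, map_sum, Finset.sum_mul_sum]
  simp [Complex.re_sum]

private lemma key_id {K : ℕ} (v : Fin K → ℂ) :
    (K : ℝ) * ∑ i, Complex.normSq (v i) - Complex.normSq (∑ i, v i)
      = (1/2) * ∑ i, ∑ j, Complex.normSq (v i - v j) := by
  have h2 : ∀ i j : Fin K, Complex.normSq (v i - v j)
      = Complex.normSq (v i) + Complex.normSq (v j)
        - 2 * (v i * (starRingEnd ℂ) (v j)).re := fun i j => Complex.normSq_sub _ _
  rw [normSq_sum']
  simp only [h2, Finset.sum_sub_distrib, Finset.sum_add_distrib, Finset.sum_const,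
    Finset.card_univ, Fintype.card_fin, nsmul_eq_mul, ← Finset.mul_sum]
  ring

/-- a hybrid code (pairwise orthogonal inner codes spanned by the
orthonormal vectors `c a i`, with projectors `P_a = Σ_i |c_i^{(a)}⟩⟨c_i^{(a)}|`)
detects all errors of the error basis of weight `d` iff
`A_d^{(a,a)} = B_d^{(a,a)}` for all `a` and `B_d^{(a,b)} = 0` for all `a ≠ b`. -/
theorem stmt_6 {N K M : ℕ} (hK : 0 < K) (hM : 0 < M)
    (c : Fin M → Fin K → (Fin N → ℂ))
    (hON : ∀ a i b j, star (c a i) ⬝ᵥ c b j =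
      if (a, i) = (b, j) then (1 : ℂ) else 0)
    (P : Fin M → Matrix (Fin N) (Fin N) ℂ)
    (hP : ∀ a, P a = ∑ i : Fin K, vecMulVec (c a i) (star (c a i)))
    {ι : Type*} [Fintype ι] [DecidableEq ι]
    (E : ι → Matrix (Fin N) (Fin N) ℂ) (wt : ι → ℕ) (d : ℕ) :
    (∀ e, wt e = d → ∃ lam : Fin M → ℂ, ∀ (a b : Fin M) (i j : Fin K),
        star (c b i) ⬝ᵥ (E e).mulVec (c a j) =
          if a = b ∧ i = j then lam a else 0) ↔
      ((∀ a : Fin M,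
          (1 / (K : ℂ) ^ 2) * ∑ e ∈ univ.filter (fun e => wt e = d),
              (E e * P a).trace * ((E e)ᴴ * P a).trace =
            (1 / (K : ℂ)) * ∑ e ∈ univ.filter (fun e => wt e = d),
              (E e * P a * (E e)ᴴ * P a).trace) ∧
        (∀ a b : Fin M, a ≠ b →
          (1 / (K : ℂ)) * ∑ e ∈ univ.filter (fun e => wt e = d),
            (E e * P a * (E e)ᴴ * P b).trace = 0)) := by
  have hKC : (K : ℂ) ≠ 0 := Nat.cast_ne_zero.mpr hK.ne'
  have hKR : (0 : ℝ) < K := by exact_mod_cast hK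
  set S := univ.filter (fun e => wt e = d) with hS
  constructor
  · intro h
    choose lam hlam using h
    constructor
    · intro a
      have per : ∀ e ∈ S, (E e * P a).trace * ((E e)ᴴ * P a).trace
          = (K : ℂ) * (E e * P a * (E e)ᴴ * P a).trace := by
        intro e heS
        have he : wt e = d := (mem_filter.mp heS).2
        rw [hP, trace1, trace2, trace3]
        have h1 : ∀ i : Fin K, star (c a i) ⬝ᵥ (E e) *ᵥ (c a i) = lam e he a := by
          intro i; rw [hlam e he a a i i]; simp
        have h2 : (∑ i : Fin K, star (c a i) ⬝ᵥ (E e) *ᵥ c a i)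
            = (K : ℂ) * lam e he a := by
          simp [h1, Finset.sum_const, Finset.card_univ]
        have h3 : ∀ i j : Fin K,
            ((Complex.normSq (star (c a i) ⬝ᵥ (E e) *ᵥ (c a j)) : ℝ) : ℂ)
            = if i = j then ((Complex.normSq (lam e he a) : ℝ) : ℂ) else 0 := by
          intro i j
          rw [hlam e he a a i j]
          by_cases hij : i = j
          · subst hij; simp
          · simp [hij]
        have h4 : (∑ i, ∑ j : Fin K,
            ((Complex.normSq (star (c a i) ⬝ᵥ (E e) *ᵥ (c a j)) : ℝ) : ℂ))
            = (K : ℂ) * ((Complex.normSq (lam e he a) : ℝ) : ℂ) := by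
          simp [h3, Finset.sum_ite_eq, Finset.sum_const, Finset.card_univ]
        rw [h2, h4]
        simp only [Complex.star_def, _root_.map_mul, Complex.conj_natCast]
        linear_combination ((K:ℂ))^2 * Complex.mul_conj (lam e he a)
      rw [Finset.sum_congr rfl per, ← Finset.mul_sum]
      field_simp
    · intro a b hab
      have per0 : ∀ e ∈ S, (E e * P a * (E e)ᴴ * P b).trace = 0 := by
        intro e heS
        have he : wt e = d := (mem_filter.mp heS).2
        rw [hP, hP, trace3]
        refine Finset.sum_eq_zero fun i _ => Finset.sum_eq_zero fun j _ => ?_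
        rw [hlam e he a b i j]
        simp [hab]
      rw [Finset.sum_eq_zero per0, mul_zero]
  · rintro ⟨hA, hB⟩ e he
    have heS : e ∈ S := mem_filter.mpr ⟨mem_univ e, he⟩
    -- cross blocks vanish
    have cross : ∀ a b : Fin M, a ≠ b → ∀ i j : Fin K,
        star (c b i) ⬝ᵥ (E e) *ᵥ (c a j) = 0 := by
      intro a b hab i j
      have h0 := hB a b hab
      have h1 : ∀ e' ∈ S, (E e' * P a * (E e')ᴴ * P b).trace
          = ((∑ p, ∑ q, Complex.normSq (star (c b p) ⬝ᵥ (E e') *ᵥ (c a q)) : ℝ) : ℂ) := by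
        intro e' _; rw [hP a, hP b, trace3]; push_cast; rfl
      rw [Finset.sum_congr rfl h1] at h0
      have h2 : (∑ e' ∈ S,
          ((∑ p, ∑ q, Complex.normSq (star (c b p) ⬝ᵥ (E e') *ᵥ (c a q)) : ℝ) : ℂ)) = 0 := by
        have := mul_eq_zero.mp h0
        rcases this with h | h
        · exact absurd h (by simp [hKC])
        · exact h
      have h3 : (∑ e' ∈ S,
          (∑ p, ∑ q, Complex.normSq (star (c b p) ⬝ᵥ (E e') *ᵥ (c a q)))) = 0 := by
        exact_mod_cast h2
      have h4 := (Finset.sum_eq_zero_iff_of_nonneg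
        (fun e' _ => (Finset.sum_nonneg fun _ _ => Finset.sum_nonneg fun _ _ => Complex.normSq_nonneg _))).mp h3 e heS
      have h5 := (Finset.sum_eq_zero_iff_of_nonneg
        (fun p _ => Finset.sum_nonneg fun _ _ => Complex.normSq_nonneg _)).mp h4 i (mem_univ i)
      have h6 := (Finset.sum_eq_zero_iff_of_nonneg
        (fun q _ => Complex.normSq_nonneg _)).mp h5 j (mem_univ j)
      exact Complex.normSq_eq_zero.mp h6
    -- diagonal blocks
    have diag : ∀ a : Fin M,
        (∀ i j : Fin K, star (c a i) ⬝ᵥ (E e) *ᵥ (c a j)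
          = if i = j then star (c a ⟨0, hK⟩) ⬝ᵥ (E e) *ᵥ (c a ⟨0, hK⟩) else 0) := by
      intro a
      have h0 := hA a
      have hTA : ∀ e' ∈ S, (E e' * P a).trace * ((E e')ᴴ * P a).trace
          = ((Complex.normSq (∑ i, star (c a i) ⬝ᵥ (E e') *ᵥ (c a i)) : ℝ) : ℂ) := by
        intro e' _
        rw [hP, trace1, trace2, Complex.star_def, Complex.mul_conj]
      have hTB : ∀ e' ∈ S, (E e' * P a * (E e')ᴴ * P a).trace
          = ((∑ p, ∑ q, Complex.normSq (star (c a p) ⬝ᵥ (E e') *ᵥ (c a q)) : ℝ) : ℂ) := by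
        intro e' _; rw [hP, trace3]; push_cast; rfl
      rw [Finset.sum_congr rfl hTA, Finset.sum_congr rfl hTB] at h0
      -- pass to reals
      have h1 : (∑ e' ∈ S, Complex.normSq (∑ i, star (c a i) ⬝ᵥ (E e') *ᵥ (c a i)))
          = (K : ℝ) * ∑ e' ∈ S,
              (∑ p, ∑ q, Complex.normSq (star (c a p) ⬝ᵥ (E e') *ᵥ (c a q))) := by
        have h1c : (∑ e' ∈ S,
            ((Complex.normSq (∑ i, star (c a i) ⬝ᵥ (E e') *ᵥ (c a i)) : ℝ) : ℂ))
            = (K : ℂ) * ∑ e' ∈ S,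
              ((∑ p, ∑ q, Complex.normSq (star (c a p) ⬝ᵥ (E e') *ᵥ (c a q)) : ℝ) : ℂ) := by
          have hK2 : ((K : ℂ) ^ 2) ≠ 0 := pow_ne_zero _ hKC
          calc (∑ e' ∈ S, ((Complex.normSq (∑ i, star (c a i) ⬝ᵥ (E e') *ᵥ (c a i)) : ℝ) : ℂ))
              = (K : ℂ) ^ 2 * ((1 / (K : ℂ) ^ 2) *
                ∑ e' ∈ S, ((Complex.normSq (∑ i, star (c a i) ⬝ᵥ (E e') *ᵥ (c a i)) : ℝ) : ℂ)) := by
                field_simp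
            _ = (K : ℂ) ^ 2 * ((1 / (K : ℂ)) *
                ∑ e' ∈ S, ((∑ p, ∑ q, Complex.normSq (star (c a p) ⬝ᵥ (E e') *ᵥ (c a q)) : ℝ) : ℂ)) := by
                rw [h0]
            _ = _ := by field_simp
        exact_mod_cast h1c
      -- pointwise inequality
      have hle : ∀ e' : ι,
          Complex.normSq (∑ i, star (c a i) ⬝ᵥ (E e') *ᵥ (c a i))
            ≤ (K : ℝ) * ∑ p, ∑ q, Complex.normSq (star (c a p) ⬝ᵥ (E e') *ᵥ (c a q)) := by
        intro e'
        have hk : (K:ℝ) * (∑ i, Complex.normSq (star (c a i) ⬝ᵥ (E e') *ᵥ (c a i)))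
            - Complex.normSq (∑ i, star (c a i) ⬝ᵥ (E e') *ᵥ (c a i))
            = (1/2) * ∑ i, ∑ j, Complex.normSq
              ((star (c a i) ⬝ᵥ (E e') *ᵥ (c a i)) - (star (c a j) ⬝ᵥ (E e') *ᵥ (c a j))) :=
          key_id _
        have hnn : (0:ℝ) ≤ (1/2) * ∑ i, ∑ j, Complex.normSq
            ((star (c a i) ⬝ᵥ (E e') *ᵥ (c a i)) - (star (c a j) ⬝ᵥ (E e') *ᵥ (c a j))) := by
          exact mul_nonneg (by norm_num) (Finset.sum_nonneg fun _ _ => Finset.sum_nonneg fun _ _ => Complex.normSq_nonneg _)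
        have hstep : (∑ i : Fin K, Complex.normSq (star (c a i) ⬝ᵥ (E e') *ᵥ (c a i)))
            ≤ ∑ p, ∑ q, Complex.normSq (star (c a p) ⬝ᵥ (E e') *ᵥ (c a q)) := by
          refine Finset.sum_le_sum fun i _ => ?_
          exact Finset.single_le_sum
            (f := fun q => Complex.normSq (star (c a i) ⬝ᵥ (E e') *ᵥ (c a q)))
            (fun q _ => Complex.normSq_nonneg _) (mem_univ i)
        nlinarith [hk, hnn, hstep]
      -- equality at e
      have heq : (K : ℝ) * (∑ p, ∑ q, Complex.normSq (star (c a p) ⬝ᵥ (E e) *ᵥ (c a q)))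
          = Complex.normSq (∑ i, star (c a i) ⬝ᵥ (E e) *ᵥ (c a i)) := by
        have hz : (∑ e' ∈ S, ((K : ℝ) * (∑ p, ∑ q, Complex.normSq (star (c a p) ⬝ᵥ (E e') *ᵥ (c a q)))
            - Complex.normSq (∑ i, star (c a i) ⬝ᵥ (E e') *ᵥ (c a i)))) = 0 := by
          rw [Finset.sum_sub_distrib, ← Finset.mul_sum, ← h1, sub_self]
        have := (Finset.sum_eq_zero_iff_of_nonneg
          (fun e' _ => sub_nonneg.mpr (hle e'))).mp hz e heS
        linarith [this]
      -- split diagonal vs off-diagonal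
      have hsplit : (∑ p, ∑ q, Complex.normSq (star (c a p) ⬝ᵥ (E e) *ᵥ (c a q)))
          = (∑ i : Fin K, Complex.normSq (star (c a i) ⬝ᵥ (E e) *ᵥ (c a i)))
            + ∑ p, ∑ q ∈ univ.erase p, Complex.normSq (star (c a p) ⬝ᵥ (E e) *ᵥ (c a q)) := by
        rw [← Finset.sum_add_distrib]
        refine Finset.sum_congr rfl fun p _ => ?_
        exact (Finset.add_sum_erase _ _ (mem_univ p)).symm
      have hk : (K:ℝ) * (∑ i, Complex.normSq (star (c a i) ⬝ᵥ (E e) *ᵥ (c a i)))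
          - Complex.normSq (∑ i, star (c a i) ⬝ᵥ (E e) *ᵥ (c a i))
          = (1/2) * ∑ i, ∑ j, Complex.normSq
            ((star (c a i) ⬝ᵥ (E e) *ᵥ (c a i)) - (star (c a j) ⬝ᵥ (E e) *ᵥ (c a j))) :=
        key_id _
      have hKT : (K:ℝ) * (∑ p, ∑ q, Complex.normSq (star (c a p) ⬝ᵥ (E e) *ᵥ (c a q)))
          = (K:ℝ) * (∑ i : Fin K, Complex.normSq (star (c a i) ⬝ᵥ (E e) *ᵥ (c a i)))
            + (K:ℝ) * (∑ p, ∑ q ∈ univ.erase p,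
                Complex.normSq (star (c a p) ⬝ᵥ (E e) *ᵥ (c a q))) := by
        rw [hsplit]; ring
      have hoffnn : (0:ℝ) ≤ ∑ p, ∑ q ∈ univ.erase p,
          Complex.normSq (star (c a p) ⬝ᵥ (E e) *ᵥ (c a q)) :=
        (Finset.sum_nonneg fun _ _ => Finset.sum_nonneg fun _ _ => Complex.normSq_nonneg _)
      have hdiffnn : (0:ℝ) ≤ ∑ i, ∑ j, Complex.normSq
          ((star (c a i) ⬝ᵥ (E e) *ᵥ (c a i)) - (star (c a j) ⬝ᵥ (E e) *ᵥ (c a j))) :=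
        (Finset.sum_nonneg fun _ _ => Finset.sum_nonneg fun _ _ => Complex.normSq_nonneg _)
      -- both nonneg pieces vanish
      have h10 : (K:ℝ) * (∑ p, ∑ q ∈ univ.erase p,
          Complex.normSq (star (c a p) ⬝ᵥ (E e) *ᵥ (c a q))) = 0 := by
        have hge : 0 ≤ (K:ℝ) * (∑ p, ∑ q ∈ univ.erase p,
            Complex.normSq (star (c a p) ⬝ᵥ (E e) *ᵥ (c a q))) :=
          mul_nonneg hKR.le hoffnn
        have hle0 : (K:ℝ) * (∑ p, ∑ q ∈ univ.erase p,
            Complex.normSq (star (c a p) ⬝ᵥ (E e) *ᵥ (c a q))) ≤ 0 := by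
          linarith [heq, hKT, hk, hdiffnn]
        linarith
      have hoff0 : (∑ p, ∑ q ∈ univ.erase p,
          Complex.normSq (star (c a p) ⬝ᵥ (E e) *ᵥ (c a q))) = 0 :=
        (mul_eq_zero.mp h10).resolve_left (ne_of_gt hKR)
      have hdiff0 : (∑ i, ∑ j, Complex.normSq
          ((star (c a i) ⬝ᵥ (E e) *ᵥ (c a i)) - (star (c a j) ⬝ᵥ (E e) *ᵥ (c a j)))) = 0 := by
        linarith [heq, hKT, hk, h10]
      intro i j
      by_cases hij : i = j
      · subst hij
        simp only [if_pos rfl]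
        have h5 := (Finset.sum_eq_zero_iff_of_nonneg
          (fun p _ => Finset.sum_nonneg fun _ _ => Complex.normSq_nonneg _)).mp hdiff0 i (mem_univ i)
        have h6 := (Finset.sum_eq_zero_iff_of_nonneg
          (fun q _ => Complex.normSq_nonneg _)).mp h5 ⟨0, hK⟩ (mem_univ _)
        exact sub_eq_zero.mp (Complex.normSq_eq_zero.mp h6)
      · simp only [if_neg hij]
        have h5 := (Finset.sum_eq_zero_iff_of_nonneg
          (fun p _ => Finset.sum_nonneg fun _ _ => Complex.normSq_nonneg _)).mp hoff0 i (mem_univ i)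
        have h6 := (Finset.sum_eq_zero_iff_of_nonneg
          (fun q _ => Complex.normSq_nonneg _)).mp h5 j
          (Finset.mem_erase.mpr ⟨fun hji => hij hji.symm, mem_univ j⟩)
        exact Complex.normSq_eq_zero.mp h6
    refine ⟨fun a => star (c a ⟨0, hK⟩) ⬝ᵥ (E e) *ᵥ (c a ⟨0, hK⟩), ?_⟩
    intro a b i j
    by_cases hab : a = b
    · subst hab
      rw [diag a i j]
      by_cases hij : i = j
      · simp [hij]
      · simp [hij]
    · simp only [if_neg (fun hc : a = b ∧ i = j => hab hc.1)]
      exact cross a b hab i j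
end

section
/- Let n be odd and J ⊆ F_2^{n-1} be the set of even-weight strings whose last coordinate is 0. Define C_0 = span{ (|x⟩ + |x̄⟩)(|0⟩+|1⟩)/2 : x ∈ J } and C_1 = span{ (|x⟩ − |x̄⟩)(|0⟩−|1⟩)/2 : x ∈ J }, where x̄ is the bitwise complement of x. Then C_0 and C_1 are orthogonal subspaces of (C^2)^{⊗n}, each of dimension 2^{n-3}, and the hybrid code {C_0, C_1} detects every single-qubit Pauli error: for any Pauli operator E of weight 1, ⟨u|E|v⟩ = 0 for all unit u ∈ C_0, v ∈ C_1, and ⟨c_i|E|c_j⟩ = λ_E^{(a)} δ_{ij} within each C_a. Hence there exists an [[n, n-3 : 1, 2]]_2 hybrid code. -/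
open Matrix Finset
open scoped InnerProductSpace

/-- Single-qubit Pauli matrices, indexed by `ZMod 2`. -/
def sigmaX : Matrix (ZMod 2) (ZMod 2) ℂ := fun i j => if i = j then 0 else 1
def sigmaY : Matrix (ZMod 2) (ZMod 2) ℂ :=
  fun i j => if i = j then 0 else if i = 0 then -Complex.I else Complex.I
def sigmaZ : Matrix (ZMod 2) (ZMod 2) ℂ :=
  fun i j => if i = j then (if i = 0 then 1 else -1) else 0

/-- The weight-one operator acting as the `2 × 2` matrix `P` on qubit `ℓ`. -/
def opAt (n : ℕ) (ℓ : Fin n) (P : Matrix (ZMod 2) (ZMod 2) ℂ) :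
    Matrix (Fin n → ZMod 2) (Fin n → ZMod 2) ℂ :=
  fun y z => if ∀ j, j ≠ ℓ → y j = z j then P (y ℓ) (z ℓ) else 0

/-- Computational basis vector `|y⟩` of `(ℂ²)^{⊗(m+3)}`. -/
noncomputable def bvec (m : ℕ) (y : Fin (m + 3) → ZMod 2) :
    EuclideanSpace ℂ (Fin (m + 3) → ZMod 2) := EuclideanSpace.single y 1

/-- Bitwise complement on the first `m+2` qubits. -/
def compl' (m : ℕ) (x : Fin (m + 2) → ZMod 2) : Fin (m + 2) → ZMod 2 :=
  fun j => x j + 1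

/-- `|c_x^{(0)}⟩ = (|x⟩ + |x̄⟩)(|0⟩ + |1⟩)/2`. -/
noncomputable def c0 (m : ℕ) (x : Fin (m + 2) → ZMod 2) :
    EuclideanSpace ℂ (Fin (m + 3) → ZMod 2) :=
  (1 / 2 : ℂ) • (bvec m (Fin.snoc x 0) + bvec m (Fin.snoc x 1) +
    bvec m (Fin.snoc (compl' m x) 0) + bvec m (Fin.snoc (compl' m x) 1))

/-- `|c_x^{(1)}⟩ = (|x⟩ − |x̄⟩)(|0⟩ − |1⟩)/2`. -/
noncomputable def c1 (m : ℕ) (x : Fin (m + 2) → ZMod 2) :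
    EuclideanSpace ℂ (Fin (m + 3) → ZMod 2) :=
  (1 / 2 : ℂ) • (bvec m (Fin.snoc x 0) - bvec m (Fin.snoc x 1) -
    bvec m (Fin.snoc (compl' m x) 0) + bvec m (Fin.snoc (compl' m x) 1))

/-- `J`: even-weight strings of length `m+2` whose last coordinate is `0`. -/
def Jset (m : ℕ) : Set (Fin (m + 2) → ZMod 2) :=
  {x | Even ((univ.filter (fun j => x j = 1)).card) ∧ x (Fin.last (m + 1)) = 0}

/-!
Write `codeVec ε x = (|x0⟩ + ε|x1⟩ + ε|x̄0⟩ + |x̄1⟩)/2`, so that `C₀` and `C₁` are spanned by the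
vectors `codeVec 1 x` and `codeVec (-1) x`, `x ∈ J`. For any `2 × 2` matrix `P` acting on the last
qubit, `⟨codeVec ε x| P |codeVec δ x'⟩` only pairs basis strings whose first `m + 2` bits agree;
as `x, x'` end in `0` and `x̄, x̄'` in `1`, this forces `x = x'`. For `P` acting on a qubit
`ℓ < m + 2`, two strings of even weight that differ only at `ℓ` are equal (complementing
preserves the parity since `m + 2` is even), so only the diagonal of `P` contributes, and it
contributes `(1 + ε̄δ) tr P / 4`. Either way the matrix element is `δ_{xx'} λ`, with `λ`
independent of `x` and vanishing for `(ε, δ) = (±1, ∓1)`. Taking `P = 1` shows that the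
`codeVec ε x` are orthonormal for `|ε| = 1`, and `J` has `2^m` elements, being parametrised by its
first `m` bits.
-/

section Bits

variable {ι : Type*} [Fintype ι]

lemma even_card_filter_eq_one_iff_sum_eq_zero (x : ι → ZMod 2) :
    Even #{j | x j = 1} ↔ ∑ j, x j = 0 := by
  have hx : ∀ j, x j = if x j = 1 then 1 else 0 := fun j => by
    generalize x j = t; fin_cases t <;> rfl
  rw [Finset.sum_congr rfl fun j _ => hx j, Finset.sum_boole, ZMod.natCast_eq_zero_iff_even]

lemma sum_add_one_of_even_card (x : ι → ZMod 2) (h : Even (Fintype.card ι)) :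
    ∑ j, (x j + 1) = ∑ j, x j := by
  rw [Finset.sum_add_distrib, Finset.sum_const, Finset.card_univ, nsmul_one,
    ZMod.natCast_eq_zero_iff_even.2 h, add_zero]

lemma eq_of_eq_off_of_sum_eq {G : Type*} [AddCommGroup G] [DecidableEq ι] {a b : ι → G} (ℓ : ι)
    (hoff : ∀ k, k ≠ ℓ → a k = b k) (hsum : ∑ k, a k = ∑ k, b k) : a = b := by
  have herase : ∑ k ∈ univ.erase ℓ, a k = ∑ k ∈ univ.erase ℓ, b k :=
    Finset.sum_congr rfl fun k hk => hoff k (Finset.ne_of_mem_erase hk)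
  rw [← Finset.add_sum_erase _ _ (mem_univ ℓ), ← Finset.add_sum_erase _ _ (mem_univ ℓ),
    herase, add_left_inj] at hsum
  funext k
  by_cases hk : k = ℓ
  · rwa [hk]
  · exact hoff k hk

end Bits

lemma trace_zmod_two {R : Type*} [AddCommMonoid R] (P : Matrix (ZMod 2) (ZMod 2) R) (t : ZMod 2) :
    P.trace = P t t + P (t + 1) (t + 1) := by
  fin_cases t
  · exact Matrix.trace_fin_two P
  · exact (Matrix.trace_fin_two P).trans (add_comm _ _)

section OpAt

variable {n : ℕ} (P : Matrix (ZMod 2) (ZMod 2) ℂ)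

lemma opAt_snoc_last (a b : Fin (n + 1) → ZMod 2) (i j : ZMod 2) :
    opAt (n + 2) (Fin.last (n + 1)) P (Fin.snoc a i) (Fin.snoc b j) =
      if a = b then P i j else 0 := by
  simp [opAt, Fin.forall_fin_succ', Fin.castSucc_ne_last, funext_iff]

lemma opAt_castSucc_snoc (ℓ : Fin (n + 1)) (a b : Fin (n + 1) → ZMod 2) (i j : ZMod 2) :
    opAt (n + 2) ℓ.castSucc P (Fin.snoc a i) (Fin.snoc b j) =
      if i = j ∧ ∀ k, k ≠ ℓ → a k = b k then P (a ℓ) (b ℓ) else 0 := by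
  simp [opAt, Fin.forall_fin_succ', (Fin.castSucc_ne_last ℓ).symm, and_comm]

lemma opAt_castSucc_snoc_of_sum_eq (ℓ : Fin (n + 1)) {a b : Fin (n + 1) → ZMod 2}
    (hsum : ∑ k, a k = ∑ k, b k) (i j : ZMod 2) :
    opAt (n + 2) ℓ.castSucc P (Fin.snoc a i) (Fin.snoc b j) =
      if i = j ∧ a = b then P (a ℓ) (a ℓ) else 0 := by
  rw [opAt_castSucc_snoc]
  by_cases hab : a = b
  · subst hab; simp
  · have : ¬ ∀ k, k ≠ ℓ → a k = b k := fun hoff => hab (eq_of_eq_off_of_sum_eq ℓ hoff hsum)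
    simp [hab, this]

lemma opAt_one (ℓ : Fin n) : opAt n ℓ (1 : Matrix (ZMod 2) (ZMod 2) ℂ) = 1 := by
  ext y z
  by_cases hyz : y = z
  · subst hyz; simp [opAt]
  · have : ¬ ((∀ j, j ≠ ℓ → y j = z j) ∧ y ℓ = z ℓ) := fun h =>
      hyz (funext fun j => if hj : j = ℓ then hj ▸ h.2 else h.1 j hj)
    simp only [opAt, Matrix.one_apply, hyz]
    split_ifs <;> tauto

end OpAt

section Jset

variable {m : ℕ}

lemma mem_Jset_iff {x : Fin (m + 2) → ZMod 2} :
    x ∈ Jset m ↔ ∑ j, x j = 0 ∧ x (Fin.last (m + 1)) = 0 := by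
  rw [Jset, Set.mem_ofPred_eq, even_card_filter_eq_one_iff_sum_eq_zero]

lemma compl'_injective : Function.Injective (compl' m) :=
  fun _ _ h => funext fun k => add_right_cancel (congrFun h k)

lemma sum_compl' (hm : Even m) (x : Fin (m + 2) → ZMod 2) :
    ∑ j, compl' m x j = ∑ j, x j :=
  sum_add_one_of_even_card x (by simpa [Nat.even_add] using hm)

lemma ne_compl'_of_mem_Jset {x x' : Fin (m + 2) → ZMod 2} (hx : x ∈ Jset m) (hx' : x' ∈ Jset m) :
    x ≠ compl' m x' := fun h => by
  simpa [compl', (mem_Jset_iff.1 hx).2, (mem_Jset_iff.1 hx').2] using congrFun h (Fin.last (m + 1))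

def jsetEmbed (m : ℕ) (y : Fin m → ZMod 2) : Fin (m + 2) → ZMod 2 :=
  Fin.snoc (Fin.snoc y (∑ i, y i)) 0

lemma jsetEmbed_injective : Function.Injective (jsetEmbed m) := fun y y' h => by
  simpa [jsetEmbed] using congrArg (fun x => Fin.init (Fin.init x)) h

lemma range_jsetEmbed : Set.range (jsetEmbed m) = Jset m := by
  ext x
  rw [mem_Jset_iff, Fin.sum_univ_castSucc]
  constructor
  · rintro ⟨y, rfl⟩
    simp [jsetEmbed, Fin.sum_univ_castSucc, CharTwo.add_self_eq_zero]
  · rintro ⟨hsum, hlast⟩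
    have hcheck : Fin.init x (Fin.last m) = ∑ i, Fin.init (Fin.init x) i := by
      rw [hlast, add_zero, Fin.sum_univ_castSucc, CharTwo.add_eq_zero] at hsum
      exact hsum.symm
    refine ⟨Fin.init (Fin.init x), ?_⟩
    rw [jsetEmbed, ← hcheck, ← hlast, Fin.snoc_init_self, Fin.snoc_init_self]

end Jset

section Span

variable {E : Type*} [NormedAddCommGroup E] [InnerProductSpace ℂ E]

lemma inner_map_eq_zero_of_mem_span (A : E →ₗ[ℂ] E) {S T : Set E}
    (h : ∀ s ∈ S, ∀ t ∈ T, ⟪s, A t⟫_ℂ = 0) {u v : E} (hu : u ∈ Submodule.span ℂ S)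
    (hv : v ∈ Submodule.span ℂ T) : ⟪u, A v⟫_ℂ = 0 := by
  refine (Submodule.isOrtho_span.2 ?_).inner_eq hu
    (Submodule.map_span A T ▸ Submodule.mem_map_of_mem hv)
  rintro s hs _ ⟨t, ht, rfl⟩
  exact h s hs t ht

end Span

section CodeVec

open ComplexConjugate

variable {m : ℕ}

noncomputable def codeVec (m : ℕ) (ε : ℂ) (x : Fin (m + 2) → ZMod 2) :
    EuclideanSpace ℂ (Fin (m + 3) → ZMod 2) :=
  (1 / 2 : ℂ) • (bvec m (Fin.snoc x 0) + ε • bvec m (Fin.snoc x 1) +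
    ε • bvec m (Fin.snoc (compl' m x) 0) + bvec m (Fin.snoc (compl' m x) 1))

lemma c0_eq_codeVec : c0 m = codeVec m 1 := by
  funext x; simp [c0, codeVec]

lemma c1_eq_codeVec : c1 m = codeVec m (-1) := by
  funext x; simp [c1, codeVec, sub_eq_add_neg]

lemma inner_bvec_toEuclideanLin (M : Matrix (Fin (m + 3) → ZMod 2) (Fin (m + 3) → ZMod 2) ℂ)
    (y z : Fin (m + 3) → ZMod 2) :
    ⟪bvec m y, Matrix.toEuclideanLin M (bvec m z)⟫_ℂ = M y z := by
  simp [bvec, EuclideanSpace.inner_single_left, Matrix.mulVec_single]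

lemma inner_codeVec_opAt_last {x x' : Fin (m + 2) → ZMod 2} (hx : x ∈ Jset m)
    (hx' : x' ∈ Jset m) (P : Matrix (ZMod 2) (ZMod 2) ℂ) (ε δ : ℂ) :
    ⟪codeVec m ε x, Matrix.toEuclideanLin (opAt (m + 3) (Fin.last (m + 2)) P) (codeVec m δ x')⟫_ℂ =
      if x = x' then ((1 + conj ε * δ) * P.trace + (conj ε + δ) * (P 0 1 + P 1 0)) / 4 else 0 := by
  have h₁ := ne_compl'_of_mem_Jset hx hx'
  have h₂ := (ne_compl'_of_mem_Jset hx' hx).symm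
  simp only [codeVec, inner_smul_left, inner_smul_right, inner_add_left, inner_add_right,
    map_add, map_smul, inner_bvec_toEuclideanLin, opAt_snoc_last, compl'_injective.eq_iff,
    h₁, h₂, if_false, map_div₀, map_one, map_ofNat]
  rw [show P.trace = P 0 0 + P 1 1 from trace_zmod_two P 0]
  split_ifs <;> ring

lemma inner_codeVec_opAt_castSucc (hm : Even m) {x x' : Fin (m + 2) → ZMod 2} (hx : x ∈ Jset m)
    (hx' : x' ∈ Jset m) (ℓ : Fin (m + 2)) (P : Matrix (ZMod 2) (ZMod 2) ℂ) (ε δ : ℂ) :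
    ⟪codeVec m ε x, Matrix.toEuclideanLin (opAt (m + 3) ℓ.castSucc P) (codeVec m δ x')⟫_ℂ =
      if x = x' then (1 + conj ε * δ) * P.trace / 4 else 0 := by
  have h₁ := ne_compl'_of_mem_Jset hx hx'
  have h₂ := (ne_compl'_of_mem_Jset hx' hx).symm
  simp only [codeVec, inner_smul_left, inner_smul_right, inner_add_left, inner_add_right,
    map_add, map_smul, inner_bvec_toEuclideanLin, opAt_castSucc_snoc_of_sum_eq, sum_compl' hm,
    (mem_Jset_iff.1 hx).1, (mem_Jset_iff.1 hx').1, compl'_injective.eq_iff, h₁, h₂,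
    zero_ne_one, one_ne_zero, true_and, false_and, and_false, if_false, map_div₀, map_one,
    map_ofNat]
  rw [show P.trace = P (x ℓ) (x ℓ) + P (compl' m x ℓ) (compl' m x ℓ) from trace_zmod_two P (x ℓ)]
  split_ifs <;> ring

lemma inner_codeVec {x x' : Fin (m + 2) → ZMod 2} (hx : x ∈ Jset m) (hx' : x' ∈ Jset m)
    (ε δ : ℂ) :
    ⟪codeVec m ε x, codeVec m δ x'⟫_ℂ = if x = x' then (1 + conj ε * δ) / 2 else 0 := by
  have h := inner_codeVec_opAt_last hx hx' 1 ε δ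
  rw [opAt_one, Matrix.toLpLin_one, LinearMap.id_apply, Matrix.trace_one, ZMod.card,
    Matrix.one_apply_ne zero_ne_one, Matrix.one_apply_ne one_ne_zero] at h
  rw [h]
  split_ifs <;> ring

lemma orthonormal_codeVec_jsetEmbed {ε : ℂ} (hε : conj ε * ε = 1) :
    Orthonormal ℂ (codeVec m ε ∘ jsetEmbed m) := by
  have hJ : ∀ y, jsetEmbed m y ∈ Jset m := fun y => range_jsetEmbed ▸ Set.mem_range_self y
  rw [orthonormal_iff_ite]
  intro y y'
  simp only [Function.comp_apply, inner_codeVec (hJ y) (hJ y'), jsetEmbed_injective.eq_iff, hε]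
  norm_num

lemma finrank_span_codeVec {ε : ℂ} (hε : conj ε * ε = 1) :
    Module.finrank ℂ (Submodule.span ℂ (codeVec m ε '' Jset m)) = 2 ^ m := by
  rw [← range_jsetEmbed, ← Set.range_comp,
    finrank_span_eq_card (orthonormal_codeVec_jsetEmbed hε).linearIndependent]
  simp

/-- The Knill–Laflamme coefficient `λ` of the error `opAt ℓ P` between `codeVec ε`, `codeVec δ`. -/
noncomputable def klCoeff (m : ℕ) (ℓ : Fin (m + 3)) (P : Matrix (ZMod 2) (ZMod 2) ℂ) (ε δ : ℂ) :
    ℂ :=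
  if ℓ = Fin.last (m + 2) then ((1 + conj ε * δ) * P.trace + (conj ε + δ) * (P 0 1 + P 1 0)) / 4
  else (1 + conj ε * δ) * P.trace / 4

lemma klCoeff_eq_zero {ℓ : Fin (m + 3)} {P : Matrix (ZMod 2) (ZMod 2) ℂ} {ε δ : ℂ}
    (h₁ : 1 + conj ε * δ = 0) (h₂ : conj ε + δ = 0) : klCoeff m ℓ P ε δ = 0 := by
  simp [klCoeff, h₁, h₂]

lemma inner_codeVec_opAt (hm : Even m) {x x' : Fin (m + 2) → ZMod 2} (hx : x ∈ Jset m)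
    (hx' : x' ∈ Jset m) (ℓ : Fin (m + 3)) (P : Matrix (ZMod 2) (ZMod 2) ℂ) (ε δ : ℂ) :
    ⟪codeVec m ε x, Matrix.toEuclideanLin (opAt (m + 3) ℓ P) (codeVec m δ x')⟫_ℂ =
      if x = x' then klCoeff m ℓ P ε δ else 0 := by
  rcases Fin.eq_castSucc_or_eq_last ℓ with ⟨ℓ, rfl⟩ | rfl
  · simpa [klCoeff, Fin.castSucc_ne_last] using inner_codeVec_opAt_castSucc hm hx hx' ℓ P ε δ
  · simpa [klCoeff] using inner_codeVec_opAt_last hx hx' P ε δ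

lemma inner_opAt_eq_zero_of_mem_span_codeVec (hm : Even m) {ℓ : Fin (m + 3)}
    {P : Matrix (ZMod 2) (ZMod 2) ℂ} {ε δ : ℂ} (h₁ : 1 + conj ε * δ = 0) (h₂ : conj ε + δ = 0) :
    ∀ u ∈ Submodule.span ℂ (codeVec m ε '' Jset m), ∀ v ∈ Submodule.span ℂ (codeVec m δ '' Jset m),
      ⟪u, Matrix.toEuclideanLin (opAt (m + 3) ℓ P) v⟫_ℂ = 0 := by
  refine fun u hu v hv => inner_map_eq_zero_of_mem_span _ ?_ hu hv
  rintro _ ⟨x, hx, rfl⟩ _ ⟨x', hx', rfl⟩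
  rw [inner_codeVec_opAt hm hx hx', klCoeff_eq_zero h₁ h₂, ite_self]

end CodeVec

/-- for odd `n = m + 3`, the spans `C₀` and `C₁` of the
`c0 x`, `c1 x` (`x ∈ J`) are orthogonal subspaces of `(ℂ²)^{⊗n}`, each of
dimension `2^{n-3}`, and the hybrid code `{C₀, C₁}` detects every weight-one
Pauli error; hence there exists an `[[n, n−3 : 1, 2]]₂` hybrid code. -/
theorem stmt_9 (m : ℕ) (hodd : Odd (m + 3)) :
    ∃ C0sp C1sp : Submodule ℂ (EuclideanSpace ℂ (Fin (m + 3) → ZMod 2)),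
      C0sp = Submodule.span ℂ (c0 m '' Jset m) ∧
      C1sp = Submodule.span ℂ (c1 m '' Jset m) ∧
      (∀ u ∈ C0sp, ∀ v ∈ C1sp, ⟪u, v⟫_ℂ = 0) ∧
      Module.finrank ℂ C0sp = 2 ^ m ∧ Module.finrank ℂ C1sp = 2 ^ m ∧
      (∀ ℓ : Fin (m + 3), ∀ P ∈ ({sigmaX, sigmaY, sigmaZ} :
          Set (Matrix (ZMod 2) (ZMod 2) ℂ)),
        (∀ u ∈ C0sp, ∀ v ∈ C1sp,
          ⟪u, Matrix.toEuclideanLin (opAt (m + 3) ℓ P) v⟫_ℂ = 0) ∧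
        (∀ u ∈ C1sp, ∀ v ∈ C0sp,
          ⟪u, Matrix.toEuclideanLin (opAt (m + 3) ℓ P) v⟫_ℂ = 0) ∧
        (∃ lam : ℂ, ∀ x ∈ Jset m, ∀ x' ∈ Jset m,
          ⟪c0 m x, Matrix.toEuclideanLin (opAt (m + 3) ℓ P) (c0 m x')⟫_ℂ =
            if x = x' then lam else 0) ∧
        (∃ lam : ℂ, ∀ x ∈ Jset m, ∀ x' ∈ Jset m,
          ⟪c1 m x, Matrix.toEuclideanLin (opAt (m + 3) ℓ P) (c1 m x')⟫_ℂ =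
            if x = x' then lam else 0)) := by
  have hm : Even m := by simpa [parity_simps] using hodd
  rw [c0_eq_codeVec, c1_eq_codeVec]
  refine ⟨_, _, rfl, rfl, fun u hu v hv => ?_, finrank_span_codeVec (by simp),
    finrank_span_codeVec (by simp), fun ℓ P _ => ⟨inner_opAt_eq_zero_of_mem_span_codeVec hm
      (by simp) (by simp), inner_opAt_eq_zero_of_mem_span_codeVec hm (by simp) (by simp),
      ⟨_, fun x hx x' hx' => inner_codeVec_opAt hm hx hx' ℓ P 1 1⟩,
      ⟨_, fun x hx x' hx' => inner_codeVec_opAt hm hx hx' ℓ P (-1) (-1)⟩⟩⟩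
  simpa [opAt_one] using inner_opAt_eq_zero_of_mem_span_codeVec hm (ℓ := Fin.last (m + 2)) (P := 1)
    (by simp) (by simp) u hu v hv
end

section
/- Gottesman's generators on 2^{2k+3} qubits, namely X_{U_k} = X^{⊗2^{2k+3}}, Z_{U_k} = Z^{⊗2^{2k+3}}, and S_j^k = X^{h_j} Z^{h_{j-1} + h_1 + h_{2k+3}} for j ∈ [2k+3] (where h_j is the j-th row of the (2k+3) × 2^{2k+3} binary matrix whose i-th column is the binary representation of i, and h_0 = 0), form a set of 2k+5 commuting Pauli operators. -/
/-!
Pauli operators `X^u Z^v` and `X^{u'} Z^{v'}` commute exactly when `v·u' = v'·u`, so it suffices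
that all the exponent vectors lie in the first-order Reed–Muller code `RM(1, 2k+3)`, spanned by the
all-ones word and the rows `h_j`, and that this code is self-orthogonal. For two generators `g, g'`
there is a bit position `c < 3` on which neither depends, so the coordinatewise product `g g'` is
invariant under the fixed-point-free involution `i ↦ i xor 2^c` of the column indices; hence
it has even weight.
-/

open Matrix Finset

/-- The `N`-qubit Pauli operator `X^u Z^v`: it maps `|y⟩` to `(-1)^{v·y} |y+u⟩`. -/
noncomputable def XZop (N : ℕ) (u v : Fin N → ZMod 2) :
    Matrix (Fin N → ZMod 2) (Fin N → ZMod 2) ℂ :=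
  fun z y => if z = y + u then (-1 : ℂ) ^ (∑ i, (v i * y i).val) else 0

/-- `hrow k j` is the `j`-th row `h_j` of the `(2k+3) × 2^{2k+3}` binary matrix
whose `i`-th column is the binary representation of `i`; `h_0 = 0`. -/
def hrow (k j : ℕ) (i : Fin (2 ^ (2 * k + 3))) : ZMod 2 :=
  if j = 0 then 0 else ((((i : ℕ) / 2 ^ (j - 1)) % 2 : ℕ) : ZMod 2)

/-- Gottesman's generator `S_j^k = X^{h_j} Z^{h_{j-1} + h_1 + h_{2k+3}}`. -/
noncomputable def Sgen (k j : ℕ) :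
    Matrix (Fin (2 ^ (2 * k + 3)) → ZMod 2) (Fin (2 ^ (2 * k + 3)) → ZMod 2) ℂ :=
  XZop (2 ^ (2 * k + 3)) (hrow k j) (hrow k (j - 1) + hrow k 1 + hrow k (2 * k + 3))

/-- The family of `2k+5` generators: `X_{U_k} = X^{⊗N}`, `Z_{U_k} = Z^{⊗N}`,
and `S_1^k, …, S_{2k+3}^k`. -/
noncomputable def fam (k : ℕ) : Fin (2 * k + 5) →
    Matrix (Fin (2 ^ (2 * k + 3)) → ZMod 2) (Fin (2 ^ (2 * k + 3)) → ZMod 2) ℂ :=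
  fun j =>
    if (j : ℕ) = 0 then XZop (2 ^ (2 * k + 3)) 1 0
    else if (j : ℕ) = 1 then XZop (2 ^ (2 * k + 3)) 0 1
    else Sgen k ((j : ℕ) - 1)

section Pauli

variable {N : ℕ}

lemma neg_one_pow_val_add {R : Type*} [Ring R] (a b : ZMod 2) :
    (-1 : R) ^ (a + b).val = (-1) ^ a.val * (-1) ^ b.val := by
  rw [← pow_add, ZMod.val_add]
  exact (neg_one_pow_eq_pow_mod_two _).symm

lemma XZop_apply (u v z y : Fin N → ZMod 2) :
    XZop N u v z y = if z = y + u then (-1 : ℂ) ^ (v ⬝ᵥ y).val else 0 := by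
  have hval : (v ⬝ᵥ y).val = (∑ i, (v i * y i).val) % 2 := by
    rw [← ZMod.val_natCast, Nat.cast_sum]
    simp only [ZMod.natCast_val, ZMod.cast_id', id, dotProduct]
  rw [XZop, hval, ← neg_one_pow_eq_pow_mod_two]

lemma XZop_mul_XZop (u v u' v' : Fin N → ZMod 2) :
    XZop N u v * XZop N u' v' = (-1 : ℂ) ^ (v ⬝ᵥ u').val • XZop N (u + u') (v + v') := by
  ext z y
  rw [mul_apply, Finset.sum_eq_single (y + u') (fun x _ hx => by simp [XZop_apply, hx])
    (by simp)]
  simp only [XZop_apply, Matrix.smul_apply, smul_eq_mul, if_true, add_assoc, add_comm u' u]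
  split_ifs
  · rw [dotProduct_add, add_dotProduct, neg_one_pow_val_add, neg_one_pow_val_add]
    ring
  · simp

lemma XZop_commute_of_dotProduct_eq {u v u' v' : Fin N → ZMod 2} (h : v ⬝ᵥ u' = v' ⬝ᵥ u) :
    Commute (XZop N u v) (XZop N u' v') := by
  rw [Commute, SemiconjBy, XZop_mul_XZop, XZop_mul_XZop, h, add_comm u, add_comm v]

end Pauli

section FlipBit

variable {n c : ℕ}

lemma Nat.xor_two_pow_div_two_pow_mod_two {a : ℕ} (x : ℕ) (h : a ≠ c) :
    (x ^^^ 2 ^ c) / 2 ^ a % 2 = x / 2 ^ a % 2 := by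
  rw [← Nat.toNat_testBit, ← Nat.toNat_testBit, Nat.testBit_xor, Nat.testBit_two_pow_of_ne h.symm,
    Bool.xor_false]

def flipBit (hc : c < n) (i : Fin (2 ^ n)) : Fin (2 ^ n) :=
  ⟨i ^^^ 2 ^ c, Nat.xor_lt_two_pow i.isLt (Nat.pow_lt_pow_right (by norm_num) hc)⟩

lemma flipBit_flipBit (hc : c < n) (i : Fin (2 ^ n)) : flipBit hc (flipBit hc i) = i :=
  Fin.ext (xor_cancel_right _ _)

lemma flipBit_ne (hc : c < n) (i : Fin (2 ^ n)) : flipBit hc i ≠ i := by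
  intro h
  have := congrArg (fun j : Fin (2 ^ n) => (j : ℕ) ^^^ i) h
  simp [flipBit, Nat.xor_comm (i : ℕ)] at this

lemma sum_eq_zero_of_flipBit_invariant {R : Type*} [Ring R] [CharP R 2] (hc : c < n)
    (f : Fin (2 ^ n) → R) (hf : ∀ i, f (flipBit hc i) = f i) : ∑ i, f i = 0 :=
  Finset.sum_ninvolution (flipBit hc) (fun i => by rw [hf, CharTwo.add_self_eq_zero])
    (fun i _ => flipBit_ne hc i) (fun _ => Finset.mem_univ _) (flipBit_flipBit hc)

end FlipBit

lemma hrow_flipBit {k a c : ℕ} (hc : c < 2 * k + 3) (ha : a ≠ c + 1)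
    (i : Fin (2 ^ (2 * k + 3))) :
    hrow k a (flipBit hc i) = hrow k a i := by
  unfold hrow flipBit
  split_ifs
  · rfl
  · rw [Nat.xor_two_pow_div_two_pow_mod_two _ (by omega)]

def reedMuller1 (k : ℕ) : Submodule (ZMod 2) (Fin (2 ^ (2 * k + 3)) → ZMod 2) :=
  Submodule.span (ZMod 2) (insert 1 (Set.range (hrow k)))

lemma hrow_mem_reedMuller1 (k j : ℕ) : hrow k j ∈ reedMuller1 k :=
  Submodule.subset_span (Set.mem_insert_of_mem _ ⟨j, rfl⟩)

lemma one_mem_reedMuller1 (k : ℕ) : 1 ∈ reedMuller1 k :=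
  Submodule.subset_span (Set.mem_insert _ _)

lemma exists_flipBit_invariant_of_mem {k : ℕ} {g : Fin (2 ^ (2 * k + 3)) → ZMod 2}
    (hg : g ∈ insert 1 (Set.range (hrow k))) :
    ∃ a, ∀ c (hc : c < 2 * k + 3), a ≠ c + 1 → ∀ i, g (flipBit hc i) = g i := by
  obtain rfl | ⟨a, rfl⟩ := hg
  · exact ⟨0, fun _ _ _ _ => rfl⟩
  · exact ⟨a, fun _ hc ha => hrow_flipBit hc ha⟩

lemma dotProduct_eq_zero_of_mem_reedMuller1 {k : ℕ} {u v : Fin (2 ^ (2 * k + 3)) → ZMod 2}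
    (hu : u ∈ reedMuller1 k) (hv : v ∈ reedMuller1 k) : u ⬝ᵥ v = 0 := by
  refine LinearMap.BilinMap.apply_apply_mem_of_mem_span ⊥ _ _ (dotProductBilin (ZMod 2) (ZMod 2))
    (fun g hg g' hg' => ?_) u v hu hv
  obtain ⟨a, ha⟩ := exists_flipBit_invariant_of_mem hg
  obtain ⟨b, hb⟩ := exists_flipBit_invariant_of_mem hg'
  obtain ⟨c, hc3, hca, hcb⟩ : ∃ c < 3, a ≠ c + 1 ∧ b ≠ c + 1 := by
    by_contra! h
    have := h 0; have := h 1; have := h 2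
    omega
  have hc : c < 2 * k + 3 := by omega
  rw [Submodule.mem_bot, dotProductBilin_apply_apply]
  exact sum_eq_zero_of_flipBit_invariant hc _ fun i => by rw [ha c hc hca, hb c hc hcb]

lemma exists_fam_eq_XZop (k : ℕ) (j : Fin (2 * k + 5)) :
    ∃ u ∈ reedMuller1 k, ∃ v ∈ reedMuller1 k, fam k j = XZop (2 ^ (2 * k + 3)) u v := by
  unfold fam Sgen
  split_ifs
  · exact ⟨1, one_mem_reedMuller1 k, 0, zero_mem _, rfl⟩
  · exact ⟨0, zero_mem _, 1, one_mem_reedMuller1 k, rfl⟩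
  · exact ⟨_, hrow_mem_reedMuller1 k _, _, add_mem (add_mem (hrow_mem_reedMuller1 k _)
      (hrow_mem_reedMuller1 k _)) (hrow_mem_reedMuller1 k _), rfl⟩

/-- Gottesman's `2k+5` generators on `2^{2k+3}` qubits —
`X_{U_k}`, `Z_{U_k}`, and `S_j^k = X^{h_j} Z^{h_{j-1}+h_1+h_{2k+3}}` for
`j ∈ [2k+3]` — pairwise commute. -/
theorem stmt_19 (k : ℕ) : ∀ i j, Commute (fam k i) (fam k j) := by
  intro i j
  obtain ⟨u, hu, v, hv, hi⟩ := exists_fam_eq_XZop k i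
  obtain ⟨u', hu', v', hv', hj⟩ := exists_fam_eq_XZop k j
  rw [hi, hj]
  apply XZop_commute_of_dotProduct_eq
  rw [dotProduct_eq_zero_of_mem_reedMuller1 hv hu', dotProduct_eq_zero_of_mem_reedMuller1 hv' hu]
end
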